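/- Every E_3-learnable countable family of pairwise nonisomorphic structures is PL-learnable: if there is a map Γ from structures to ℕ → (ℕ → ℕ), continuous on LD(K), such that for all R, R' ∈ LD(K), R ≅ R' iff Γ R E_3 Γ R', then some learner PL-learns K. -/

import Mathlib

/-!
Fix `Γ`, continuous on `LD(K)`, reducing `≅` to `E₃`. For `j ≠ p` choose a column on which
`Γ A_j` and `Γ A_p` are not `E₀`-equivalent. From `R↾s` one can count the points of that column
at which every `R' ∈ LD(K)` extending `R↾s` differs from `Γ A_j`. If `R ≅ A_i`, then by
continuity this count tends to infinity against any `p ≠ i`, while against `i` it stays below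
the finitely many true disagreements. Hence `i` eventually beats each fixed `p ≠ i`, and each
`j ≠ i` eventually loses to `i`.

The level of `j` at its `t`-th stage is the largest `N ≤ t` such that `j` beats every `p` of
code below `N`: it tends to infinity for the true index and is eventually at most the code of
the true index for every other one. The learner conjectures `j` exactly when the level of `j`
sets a new record, which happens infinitely often iff the level is unbounded.
-/

/-- A structure on domain ℕ: a binary relation given as a map to `Bool`. -/
abbrev Struc := ℕ → ℕ → Bool

/-- The restrictions of `R` and `R'` to `{0,…,s} × {0,…,s}` agree. -/
def restrEq (R R' : Struc) (s : ℕ) : Prop :=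
  ∀ x ≤ s, ∀ y ≤ s, R x y = R' x y

/-- `R` and `R'` are isomorphic structures. -/
def Isom (R R' : Struc) : Prop :=
  ∃ e : ℕ ≃ ℕ, ∀ x y, R' (e x) (e y) = R x y

/-- `R↾s` embeds into `R'`: there is a map injective on `{0,…,s}` preserving the relation. -/
def EmbedsRestr (R : Struc) (s : ℕ) (R' : Struc) : Prop :=
  ∃ h : ℕ → ℕ, (∀ x ≤ s, ∀ y ≤ s, h x = h y → x = y) ∧
    (∀ x ≤ s, ∀ y ≤ s, R' (h x) (h y) = R x y)

/-- The learning domain of a family: all isomorphic copies of members of the family. -/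
def LD {I : Type} (A : I → Struc) : Set Struc := {R | ∃ i, Isom R (A i)}

/-- A learner: its conjecture at stage `s` depends only on `R↾s`. -/
def IsLearner {I : Type} (M : Struc → ℕ → Option I) : Prop :=
  ∀ R R' s, restrEq R R' s → M R s = M R' s

/-- `M` Ex-learns the family `A`. -/
def ExLearns {I : Type} (A : I → Struc) (M : Struc → ℕ → Option I) : Prop :=
  ∀ R i, Isom R (A i) → ∃ s₀, ∀ s ≥ s₀, M R s = some i

/-- `M` Fin-learns the family `A`. -/
def FinLearns {I : Type} (A : I → Struc) (M : Struc → ℕ → Option I) : Prop :=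
  ∀ R i, Isom R (A i) →
    ∃ s₀, (∀ s < s₀, M R s = none) ∧ (∀ s ≥ s₀, M R s = some i)

/-- `M` co-learns the family `A`. -/
def CoLearns {I : Type} (A : I → Struc) (M : Struc → ℕ → Option I) : Prop :=
  ∀ R i, Isom R (A i) → ∀ j, (∃ s, M R s = some j) ↔ j ≠ i

/-- `M` nUs-learns the family `A`: it Ex-learns it and never abandons the correct conjecture. -/
def NUsLearns {I : Type} (A : I → Struc) (M : Struc → ℕ → Option I) : Prop :=
  ExLearns A M ∧
    ∀ R i, Isom R (A i) → ∀ s, M R s = some i → ∀ t ≥ s, M R t = some i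

/-- `M` Dec-learns the family `A`: it Ex-learns it and never repeats an abandoned conjecture. -/
def DecLearns {I : Type} (A : I → Struc) (M : Struc → ℕ → Option I) : Prop :=
  ExLearns A M ∧
    ∀ R ∈ LD A, ∀ (j : I) (s : ℕ), M R s = some j → M R (s + 1) ≠ some j →
      ∀ t > s, M R t ≠ some j

/-- `M` PL-learns the family `A`: the unique conjecture output infinitely often is correct. -/
def PLLearns {I : Type} (A : I → Struc) (M : Struc → ℕ → Option I) : Prop :=
  ∀ R ∈ LD A, ∀ i, {s | M R s = some i}.Infinite ↔ Isom R (A i)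

/-- The relation `E₀` on Baire space: eventual agreement. -/
def E0 (p q : ℕ → ℕ) : Prop := ∃ m, ∀ n ≥ m, p n = q n

/-- The relation `E₃` on `ℕ → (ℕ → ℕ)`: columnwise `E₀`. -/
def E3 (p q : ℕ → ℕ → ℕ) : Prop := ∀ m, E0 (p m) (q m)

/-- The relation `E_range` on Baire space: equality of ranges. -/
def Erange (p q : ℕ → ℕ) : Prop := Set.range p = Set.range q

open Filter Topology Encodable
open scoped Finset

theorem restrEq_mono {R R' : Struc} {s t : ℕ} (h : restrEq R R' t) (hst : s ≤ t) :
    restrEq R R' s :=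
  fun x hx y hy => h x (hx.trans hst) y (hy.trans hst)

theorem restrEq_symm {R R' : Struc} {s : ℕ} (h : restrEq R R' s) : restrEq R' R s :=
  fun x hx y hy => (h x hx y hy).symm

theorem restrEq_trans {R₁ R₂ R₃ : Struc} {s : ℕ} (h₁₂ : restrEq R₁ R₂ s)
    (h₂₃ : restrEq R₂ R₃ s) : restrEq R₁ R₃ s :=
  fun x hx y hy => (h₁₂ x hx y hy).trans (h₂₃ x hx y hy)

theorem Isom.symm {R R' : Struc} (h : Isom R R') : Isom R' R := by
  obtain ⟨e, he⟩ := h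
  exact ⟨e.symm, fun x y => by simpa using (he (e.symm x) (e.symm y)).symm⟩

theorem Isom.trans {R₁ R₂ R₃ : Struc} (h₁₂ : Isom R₁ R₂) (h₂₃ : Isom R₂ R₃) : Isom R₁ R₃ := by
  obtain ⟨e₁, he₁⟩ := h₁₂
  obtain ⟨e₂, he₂⟩ := h₂₃
  exact ⟨e₁.trans e₂, fun x y => (he₂ (e₁ x) (e₁ y)).trans (he₁ x y)⟩

theorem mem_LD_self {I : Type} (A : I → Struc) (i : I) : A i ∈ LD A :=
  ⟨i, ⟨Equiv.refl ℕ, fun _ _ => rfl⟩⟩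

theorem e0_iff_eventuallyEq {p q : ℕ → ℕ} : E0 p q ↔ p =ᶠ[atTop] q :=
  eventually_atTop.symm

theorem exists_restrEq_subset_of_mem_nhds {R : Struc} {U : Set Struc} (hU : U ∈ 𝓝 R) :
    ∃ s, {R' | restrEq R R' s} ⊆ U := by
  by_contra! hout
  choose R' hR'R hR'U using fun s => Set.not_subset.1 (hout s)
  have hlim : Tendsto R' atTop (𝓝 R) := by
    refine tendsto_pi_nhds.2 fun x => tendsto_pi_nhds.2 fun y => ?_
    refine tendsto_const_nhds.congr' ?_
    filter_upwards [eventually_ge_atTop (max x y)] with s hs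
    exact hR'R s x (le_of_max_le_left hs) y (le_of_max_le_right hs)
  obtain ⟨s, hs⟩ := (hlim.eventually hU).exists
  exact hR'U s hs

theorem ContinuousOn.eventually_restrEq_imp_eq {X : Type*} [TopologicalSpace X]
    [DiscreteTopology X] {f : Struc → X} {S : Set Struc} (hf : ContinuousOn f S) {R : Struc}
    (hR : R ∈ S) : ∀ᶠ s in atTop, ∀ R' ∈ S, restrEq R R' s → f R' = f R := by
  obtain ⟨U, hU, hUS⟩ := mem_nhdsWithin_iff_exists_mem_nhds_inter.1
    (hf R hR (isOpen_discrete {f R} |>.mem_nhds rfl))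
  obtain ⟨s₀, hs₀⟩ := exists_restrEq_subset_of_mem_nhds hU
  filter_upwards [eventually_ge_atTop s₀] with s hs R' hR' hRR'
  exact hUS ⟨hs₀ (restrEq_mono hRR' hs), hR'⟩

def IsRecord (f : ℕ → ℕ) (t : ℕ) : Prop := ∀ t' < t, f t' < f t

theorem isRecord_congr {f g : ℕ → ℕ} {t : ℕ} (h : ∀ t' ≤ t, f t' = g t') :
    IsRecord f t ↔ IsRecord g t := by
  simp only [IsRecord]
  rw [h t le_rfl]
  exact forall₂_congr fun t' ht' => by rw [h t' ht'.le]

theorem infinite_setOf_isRecord {f : ℕ → ℕ} (hf : Tendsto f atTop atTop) :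
    {t | IsRecord f t}.Infinite := by
  classical
  refine Set.infinite_of_forall_exists_gt fun T => ?_
  have hex : ∃ t, (Finset.range (T + 1)).sup f < f t := (hf.eventually_gt_atTop _).exists
  refine ⟨Nat.find hex, fun t' ht' => ?_, ?_⟩
  · exact (not_lt.1 (Nat.find_min hex ht')).trans_lt (Nat.find_spec hex)
  · by_contra! hle
    exact (Nat.find_spec hex).not_ge (Finset.le_sup (Finset.mem_range.2 (by omega)))

theorem finite_setOf_isRecord {f : ℕ → ℕ} {B : ℕ} (hf : ∀ᶠ t in atTop, f t ≤ B) :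
    {t | IsRecord f t}.Finite := by
  obtain ⟨T, hT⟩ := eventually_atTop.1 hf
  have hinj : Set.InjOn f {t | IsRecord f t} :=
    StrictMonoOn.injOn fun _ _ _ hb hab => hb _ hab
  have hlate : {t | IsRecord f t ∧ T ≤ t}.Finite :=
    Set.Finite.of_finite_image
      ((Set.finite_Iic B).subset (by rintro _ ⟨t, ⟨-, ht⟩, rfl⟩; exact hT t ht))
      (hinj.mono fun _ h => h.1)
  exact ((Set.finite_Iio T).union hlate).subset fun t ht => (lt_or_ge t T).imp id (⟨ht, ·⟩)

section DisagreeCount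

variable (S : Set Struc) (γ : Struc → ℕ → ℕ)

open scoped Classical in
noncomputable def disagreeCount (R : Struc) (q : ℕ → ℕ) (s : ℕ) : ℕ :=
  #{n ∈ Finset.range s | ∀ R' ∈ S, restrEq R R' s → γ R' n ≠ q n}

variable {S γ}

theorem disagreeCount_congr {R R' : Struc} {s : ℕ} (h : restrEq R R' s) (q : ℕ → ℕ) :
    disagreeCount S γ R q s = disagreeCount S γ R' q s := by
  classical
  unfold disagreeCount
  congr 1
  exact Finset.filter_congr fun n _ => forall₂_congr fun R'' _ =>
    imp_congr_left ⟨restrEq_trans (restrEq_symm h), restrEq_trans h⟩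

theorem disagreeCount_bounded {R : Struc} (hR : R ∈ S) {q : ℕ → ℕ} (h : γ R =ᶠ[atTop] q) :
    ∃ B, ∀ s, disagreeCount S γ R q s ≤ B := by
  obtain ⟨B, hB⟩ := eventually_atTop.1 h
  refine ⟨B, fun s => (Finset.card_le_card fun n hn => ?_).trans (Finset.card_range B).le⟩
  simp only [Finset.mem_filter] at hn
  by_contra hnB
  exact hn.2 R hR (fun _ _ _ _ => rfl) (hB n (by simpa using hnB))

theorem tendsto_disagreeCount (hγ : ContinuousOn γ S) {R : Struc} (hR : R ∈ S) {q : ℕ → ℕ}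
    (h : ¬γ R =ᶠ[atTop] q) : Tendsto (disagreeCount S γ R q) atTop atTop := by
  have hinf : {n | γ R n ≠ q n}.Infinite :=
    Nat.frequently_atTop_iff_infinite.1 (not_eventually.1 h)
  refine tendsto_atTop.2 fun N => ?_
  obtain ⟨D, hD, rfl⟩ := hinf.exists_subset_card_eq N
  have hforced : ∀ᶠ s in atTop, ∀ n ∈ D, n < s ∧ ∀ R' ∈ S, restrEq R R' s → γ R' n ≠ q n := by
    refine (eventually_all_finset D).2 fun n hn => (eventually_gt_atTop n).and ?_
    filter_upwards [((continuous_apply n).comp_continuousOn hγ).eventually_restrEq_imp_eq hR]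
      with s hs R' hR' hRR'
    exact (hs R' hR' hRR').trans_ne (hD hn)
  filter_upwards [hforced] with s hs
  classical
  exact Finset.card_le_card fun n hn =>
    Finset.mem_filter.2 ⟨Finset.mem_range.2 (hs n hn).1, (hs n hn).2⟩

theorem eventually_disagreeCount_lt (hγ : ContinuousOn γ S) {R : Struc} (hR : R ∈ S)
    {q q' : ℕ → ℕ} (h : γ R =ᶠ[atTop] q) (h' : ¬γ R =ᶠ[atTop] q') :
    ∀ᶠ s in atTop, disagreeCount S γ R q s < disagreeCount S γ R q' s := by
  obtain ⟨B, hB⟩ := disagreeCount_bounded hR h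
  filter_upwards [(tendsto_disagreeCount hγ hR h').eventually_gt_atTop B] with s hs
  exact (hB s).trans_lt hs

end DisagreeCount

theorem strictMono_pair_right (a : ℕ) : StrictMono (Nat.pair a) :=
  fun _ _ => Nat.pair_lt_pair_right a

namespace E3Learner

variable {I : Type} (A : I → Struc) (Γ : Struc → ℕ → ℕ → ℕ)

open scoped Classical in
noncomputable def sepCol (j p : I) : ℕ :=
  if h : ∃ m, ¬E0 (Γ (A j) m) (Γ (A p) m) then h.choose else 0

def Beats (R : Struc) (j p : I) (s : ℕ) : Prop :=
  disagreeCount (LD A) (fun R' => Γ R' (sepCol A Γ j p)) R (Γ (A j) (sepCol A Γ j p)) s <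
    disagreeCount (LD A) (fun R' => Γ R' (sepCol A Γ j p)) R (Γ (A p) (sepCol A Γ j p)) s

variable {A Γ}

theorem not_eventuallyEq_sepCol {j p : I} (h : ¬E3 (Γ (A j)) (Γ (A p))) :
    ¬Γ (A j) (sepCol A Γ j p) =ᶠ[atTop] Γ (A p) (sepCol A Γ j p) := by
  have hex : ∃ m, ¬E0 (Γ (A j) m) (Γ (A p) m) := not_forall.1 h
  rw [← e0_iff_eventuallyEq, sepCol, dif_pos hex]
  exact hex.choose_spec

theorem beats_congr {R R' : Struc} {s : ℕ} (h : restrEq R R' s) (j p : I) :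
    Beats A Γ R j p s ↔ Beats A Γ R' j p s := by
  simp only [Beats, disagreeCount_congr h]

section Limits

variable (hΓ : ContinuousOn Γ (LD A)) {R : Struc} (hR : R ∈ LD A) {i : I}
  (hRi : E3 (Γ R) (Γ (A i)))
include hΓ hR hRi

theorem eventually_beats {p : I} (hip : ¬E3 (Γ (A i)) (Γ (A p))) :
    ∀ᶠ s in atTop, Beats A Γ R i p s := by
  have h := e0_iff_eventuallyEq.1 (hRi (sepCol A Γ i p))
  exact eventually_disagreeCount_lt ((continuous_apply _).comp_continuousOn hΓ) hR h
    fun h' => not_eventuallyEq_sepCol hip (h.symm.trans h')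

theorem eventually_not_beats {j : I} (hji : ¬E3 (Γ (A j)) (Γ (A i))) :
    ∀ᶠ s in atTop, ¬Beats A Γ R j i s := by
  have h := e0_iff_eventuallyEq.1 (hRi (sepCol A Γ j i))
  filter_upwards [eventually_disagreeCount_lt ((continuous_apply _).comp_continuousOn hΓ) hR h
    fun h' => not_eventuallyEq_sepCol hji (h'.symm.trans h)] with s hs
  exact hs.not_gt

end Limits

variable (A Γ) [Encodable I]

open scoped Classical in
noncomputable def level (R : Struc) (j : I) (t : ℕ) : ℕ :=
  Nat.findGreatest (fun N => ∀ p ≠ j, encode p < N → Beats A Γ R j p (Nat.pair (encode j) t)) t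

open scoped Classical in
noncomputable def learner (R : Struc) (s : ℕ) : Option I :=
  (decode₂ I s.unpair.1).bind fun j =>
    if IsRecord (level A Γ R j) s.unpair.2 then some j else none

variable {A Γ}

theorem level_congr {R R' : Struc} {j : I} {t : ℕ} (h : restrEq R R' (Nat.pair (encode j) t)) :
    level A Γ R j t = level A Γ R' j t := by
  unfold level
  congr! 1 with N
  simp only [beats_congr h]

theorem learner_eq_some {R : Struc} {s : ℕ} {j : I} :
    learner A Γ R s = some j ↔ s.unpair.1 = encode j ∧ IsRecord (level A Γ R j) s.unpair.2 := by
  unfold learner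
  rw [Option.bind_eq_some_iff]
  constructor
  · rintro ⟨j', hj', hif⟩
    split_ifs at hif with hrec
    cases hif
    exact ⟨(mem_decode₂.1 hj').symm, hrec⟩
  · rintro ⟨hj, hrec⟩
    exact ⟨j, mem_decode₂.2 hj.symm, if_pos hrec⟩

theorem learner_isLearner : IsLearner (learner A Γ) := by
  intro R R' s h
  refine Option.ext fun j => ?_
  simp only [learner_eq_some]
  refine and_congr_right fun hj => isRecord_congr fun t ht => level_congr (restrEq_mono h ?_)
  calc Nat.pair (encode j) t ≤ Nat.pair (encode j) s.unpair.2 :=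
        (strictMono_pair_right _).monotone ht
    _ = s := by rw [← hj, Nat.pair_unpair]

theorem setOf_learner_eq_some (R : Struc) (j : I) :
    {s | learner A Γ R s = some j} = Nat.pair (encode j) '' {t | IsRecord (level A Γ R j) t} := by
  ext s
  simp only [Set.mem_ofPred_eq, learner_eq_some, Set.mem_image]
  constructor
  · rintro ⟨hj, ht⟩
    exact ⟨_, ht, by rw [← hj, Nat.pair_unpair]⟩
  · rintro ⟨t, ht, rfl⟩
    simpa using ht

variable (hΓ : ContinuousOn Γ (LD A)) {R : Struc} (hR : R ∈ LD A) {i : I}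
  (hRi : E3 (Γ R) (Γ (A i))) (hsep : Pairwise fun j p => ¬E3 (Γ (A j)) (Γ (A p)))
include hΓ hR hRi hsep

theorem tendsto_level : Tendsto (level A Γ R i) atTop atTop := by
  classical
  refine tendsto_atTop.2 fun N => ?_
  have hfin : {p : I | encode p < N ∧ p ≠ i}.Finite :=
    ((Set.finite_Iio N).preimage encode_injective.injOn).subset fun _ hp => hp.1
  have hbeats : ∀ᶠ t in atTop, ∀ p ∈ {p : I | encode p < N ∧ p ≠ i},
      Beats A Γ R i p (Nat.pair (encode i) t) :=
    hfin.eventually_all.2 fun p hp => (strictMono_pair_right _).tendsto_atTop.eventually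
      (eventually_beats hΓ hR hRi (hsep hp.2.symm))
  filter_upwards [hbeats, eventually_ge_atTop N] with t hbeat htN
  exact Nat.le_findGreatest htN fun p hpi hp => hbeat p ⟨hp, hpi⟩

theorem eventually_level_le {j : I} (hji : j ≠ i) :
    ∀ᶠ t in atTop, level A Γ R j t ≤ encode i := by
  classical
  filter_upwards [(strictMono_pair_right (encode j)).tendsto_atTop.eventually
    (eventually_not_beats hΓ hR hRi (hsep hji))] with t ht
  by_contra! hlt
  have hP := Nat.findGreatest_spec
    (P := fun N => ∀ p ≠ j, encode p < N → Beats A Γ R j p (Nat.pair (encode j) t))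
    (Nat.zero_le t) (by simp)
  exact ht (hP i hji.symm hlt)

theorem infinite_setOf_learner_eq_some_iff {j : I} :
    {s | learner A Γ R s = some j}.Infinite ↔ j = i := by
  rw [setOf_learner_eq_some, Set.infinite_image_iff (strictMono_pair_right _).injective.injOn]
  constructor
  · intro h
    by_contra hji
    exact h (finite_setOf_isRecord (eventually_level_le hΓ hR hRi hsep hji))
  · rintro rfl
    exact infinite_setOf_isRecord (tendsto_level hΓ hR hRi hsep)

end E3Learner

/-- Every `E₃`-learnable countable family of pairwise nonisomorphic structures is
PL-learnable. -/
theorem e3Learnable_to_plLearnable {I : Type} [Countable I] (A : I → Struc)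
    (hA : ∀ i j, i ≠ j → ¬ Isom (A i) (A j))
    (h : ∃ Γ : Struc → (ℕ → ℕ → ℕ), ContinuousOn Γ (LD A) ∧
        ∀ R ∈ LD A, ∀ R' ∈ LD A, (Isom R R' ↔ E3 (Γ R) (Γ R'))) :
    ∃ M : Struc → ℕ → Option I, IsLearner M ∧ PLLearns A M := by
  obtain ⟨Γ, hΓ, hiff⟩ := h
  let _ : Encodable I := Encodable.ofCountable I
  have hsep : Pairwise fun j p => ¬E3 (Γ (A j)) (Γ (A p)) := fun j p hjp hE =>
    hA j p hjp ((hiff _ (mem_LD_self A j) _ (mem_LD_self A p)).2 hE)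
  refine ⟨E3Learner.learner A Γ, E3Learner.learner_isLearner, fun R hR i => ?_⟩
  obtain ⟨i₀, hRi₀⟩ := id hR
  have hisom : Isom R (A i) ↔ i = i₀ :=
    ⟨fun hRi => by_contra fun hne => hA i i₀ hne (hRi.symm.trans hRi₀), fun h => h ▸ hRi₀⟩
  rw [hisom]
  exact E3Learner.infinite_setOf_learner_eq_some_iff hΓ hR
    ((hiff R hR _ (mem_LD_self A i₀)).1 hRi₀) hsep
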